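/- For every positive integer s, d₄(21s + 5, 3) = 16s + 3; that is, there exists a quaternary Hermitian LCD [21s+5, 3] code with minimum weight 16s+3, and every quaternary Hermitian LCD [21s+5, 3] code has minimum weight at most 16s+3. -/

import Mathlib

open scoped Classical

noncomputable section

/-- The finite field with four elements. -/
abbrev F4 := GaloisField 2 2

/-- The (Hamming) weight of a vector over `F4`: the number of nonzero coordinates. -/
def wt {n : ℕ} (x : Fin n → F4) : ℕ :=
  (Finset.univ.filter (fun i => x i ≠ 0)).card

/-- Hermitian inner product on `F4^n`: `∑ i, x i * (conj (y i))` with `conj z = z^2`. -/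
def hermInner {n : ℕ} (x y : Fin n → F4) : F4 :=
  ∑ i, x i * (y i) ^ 2

/-- Membership in the Hermitian dual `C^{⊥H}` of a code `C`. -/
def inHermDual {n : ℕ} (C : Submodule F4 (Fin n → F4)) (x : Fin n → F4) : Prop :=
  ∀ y ∈ C, hermInner x y = 0

/-- `C` is Hermitian LCD: `C ∩ C^{⊥H} = {0}`. -/
def IsHermLCD {n : ℕ} (C : Submodule F4 (Fin n → F4)) : Prop :=
  ∀ x ∈ C, inHermDual C x → x = 0

/-- `C` has minimum weight (exactly) `d`. -/
def minWtIs {n : ℕ} (C : Submodule F4 (Fin n → F4)) (d : ℕ) : Prop :=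
  (∃ x ∈ C, x ≠ 0 ∧ wt x = d) ∧ ∀ x ∈ C, x ≠ 0 → d ≤ wt x

/-- `C` is a quaternary Hermitian LCD `[n,k,d]` code. -/
def IsHermLCDCode (n k d : ℕ) (C : Submodule F4 (Fin n → F4)) : Prop :=
  Module.finrank F4 C = k ∧ IsHermLCD C ∧ minWtIs C d

/-- `d₄(n,k) = d`: the largest minimum weight among quaternary Hermitian LCD `[n,k]` codes
is `d`. -/
def d4Is (n k d : ℕ) : Prop :=
  (∃ C : Submodule F4 (Fin n → F4), IsHermLCDCode n k d C) ∧
  (∀ C : Submodule F4 (Fin n → F4), Module.finrank F4 C = k → IsHermLCD C →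
    ∃ x ∈ C, x ≠ 0 ∧ wt x ≤ d)

end

/-!
Every coordinate functional of a 3-dimensional quaternary code vanishes on at least 16 of its 64
codewords, so the 63 nonzero codewords have total weight at most `48 n`, and one of them has weight
at most `48 n / 63 < 16 s + 4` for `n = 21 s + 5`.

Conversely, the simplex code `[21,3,16]` has all nonzero weights equal to 16 and vanishing
Hermitian Gram matrix, so stacking it on a generator matrix adds 16 to every nonzero weight and does
not change the Hermitian Gram matrix. Starting from a `[26,3,19]` code with nonsingular Hermitian
Gram matrix, `s - 1` such steps give a `[21 s + 5, 3, 16 s + 3]` code, and a nonsingular Hermitian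
Gram matrix is what makes a code Hermitian LCD.
-/

open Finset Matrix

section AverageWeight

variable {F ι : Type*} [Field F] [Fintype F] [DecidableEq F] [Fintype ι]
  (C : Submodule F (ι → F))

theorem card_filter_apply_ne_zero_le (i : ι) :
    #{x : C | (x : ι → F) i ≠ 0} ≤
      Fintype.card F ^ Module.finrank F C - Fintype.card F ^ (Module.finrank F C - 1) := by
  set ψ : C →ₗ[F] F := (LinearMap.proj i).comp C.subtype
  have hker : Module.finrank F C - 1 ≤ Module.finrank F (LinearMap.ker ψ) := by
    have := ψ.finrank_range_add_finrank_ker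
    have := (LinearMap.range ψ).finrank_le
    rw [Module.finrank_self] at this
    omega
  have hzero : #{x : C | (x : ι → F) i = 0} = Nat.card (LinearMap.ker ψ) := by
    rw [← Fintype.card_subtype, ← Nat.card_eq_fintype_card]
    exact Nat.card_congr (Equiv.subtypeEquivRight fun x => Iff.rfl)
  have hsplit : #{x : C | (x : ι → F) i = 0} + #{x : C | (x : ι → F) i ≠ 0} =
      Fintype.card F ^ Module.finrank F C := by
    rw [← Module.card_eq_pow_finrank (K := F) (V := C), ← card_univ]
    exact card_filter_add_card_filter_not _
  rw [hzero, Module.natCard_eq_pow_finrank (K := F), Nat.card_eq_fintype_card] at hsplit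
  have := Nat.pow_le_pow_right (Fintype.card_pos (α := F)) hker
  omega

theorem sum_hammingNorm_le :
    ∑ x : C, hammingNorm (x : ι → F) ≤ Fintype.card ι *
      (Fintype.card F ^ Module.finrank F C - Fintype.card F ^ (Module.finrank F C - 1)) := by
  calc ∑ x : C, hammingNorm (x : ι → F)
      = ∑ i : ι, #{x : C | (x : ι → F) i ≠ 0} := by
        simp only [hammingNorm, card_filter]
        exact sum_comm
    _ ≤ _ := by
        refine (sum_le_sum fun i _ => card_filter_apply_ne_zero_le C i).trans_eq ?_
        rw [sum_const, Finset.card_univ, smul_eq_mul]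

theorem exists_ne_zero_mul_hammingNorm_le (hC : 0 < Module.finrank F C) :
    ∃ x ∈ C, x ≠ 0 ∧ (Fintype.card F ^ Module.finrank F C - 1) * hammingNorm x ≤
      Fintype.card ι *
        (Fintype.card F ^ Module.finrank F C - Fintype.card F ^ (Module.finrank F C - 1)) := by
  set N := Fintype.card ι *
    (Fintype.card F ^ Module.finrank F C - Fintype.card F ^ (Module.finrank F C - 1))
  have hcard : #{x : C | x ≠ 0} = Fintype.card F ^ Module.finrank F C - 1 := by
    rw [filter_ne', card_erase_of_mem (mem_univ _), card_univ,
      Module.card_eq_pow_finrank (K := F)]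
  have hne : ({x : C | x ≠ 0} : Finset C).Nonempty := by
    rw [← card_pos, hcard]
    have := Nat.one_lt_pow hC.ne' (Fintype.one_lt_card (α := F))
    omega
  obtain ⟨x, hx, hle⟩ := exists_le_of_sum_le hne
    (f := fun x : C => #{x : C | x ≠ 0} * hammingNorm (x : ι → F)) (g := fun _ => N) <| by
      rw [← mul_sum, sum_const, smul_eq_mul]
      exact Nat.mul_le_mul_left _ <|
        (sum_le_sum_of_subset (filter_subset _ _)).trans (sum_hammingNorm_le C)
  refine ⟨x, x.2, fun h => (mem_filter.1 hx).2 (Subtype.ext h), ?_⟩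
  rwa [hcard] at hle

end AverageWeight

section HermitianGram

variable {ι ι' κ R : Type*} [Fintype ι] [Fintype ι'] [CommRing R]

/-- `M` plays the role of the transpose of a generator matrix `G`: the code is the range of
`M *ᵥ ·`, and `hermGram M` is the Hermitian Gram matrix `G Ḡᵀ`. -/
def hermGram (M : Matrix ι κ R) : Matrix κ κ R :=
  Mᵀ * M.map (· ^ 2)

theorem hermGram_fromRows (A : Matrix ι κ R) (B : Matrix ι' κ R) :
    hermGram (fromRows A B) = hermGram A + hermGram B := by
  rw [hermGram, transpose_fromRows, fromRows_map, fromCols_mul_fromRows, hermGram, hermGram]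

theorem hermGram_submatrix (M : Matrix ι κ R) (e : ι' ≃ ι) :
    hermGram (M.submatrix e id) = hermGram M := by
  rw [hermGram, transpose_submatrix, ← submatrix_map, submatrix_mul_equiv, submatrix_id_id]
  rfl

theorem hermGram_map {S F : Type*} [CommRing S] [FunLike F R S] [RingHomClass F R S] (f : F)
    (M : Matrix ι κ R) :
    hermGram (M.map f) = (hermGram M).map f := by
  simp only [hermGram, Matrix.map_mul, transpose_map, Matrix.map_map, Function.comp_def, map_pow]

end HermitianGram

section HammingNorm

variable {ι ι' R : Type*} [Fintype ι] [Fintype ι'] [Zero R] [DecidableEq R]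

theorem hammingNorm_sumElim (x : ι → R) (y : ι' → R) :
    hammingNorm (Sum.elim x y) = hammingNorm x + hammingNorm y := by
  simp only [hammingNorm, card_filter, Fintype.sum_sum_type, Sum.elim_inl, Sum.elim_inr]
  rfl

theorem hammingNorm_comp_equiv (x : ι → R) (e : ι' ≃ ι) :
    hammingNorm (x ∘ e) = hammingNorm x := by
  simp only [hammingNorm, card_filter]
  exact e.sum_comp (fun i => if x i ≠ 0 then 1 else 0)

end HammingNorm

section MinimumWeight

variable {ι ι' κ R : Type*} [Fintype ι] [Fintype ι'] [Fintype κ] [CommRing R] [DecidableEq R]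

def HasMinWeight (M : Matrix ι κ R) (d : ℕ) : Prop :=
  (∃ v ≠ 0, hammingNorm (M *ᵥ v) = d) ∧ ∀ v ≠ 0, d ≤ hammingNorm (M *ᵥ v)

theorem HasMinWeight.fromRows {S : Matrix ι' κ R} {M : Matrix ι κ R} {w d : ℕ}
    (hS : ∀ v ≠ 0, hammingNorm (S *ᵥ v) = w) (hM : HasMinWeight M d) :
    HasMinWeight (fromRows S M) (w + d) := by
  simp only [HasMinWeight, fromRows_mulVec, hammingNorm_sumElim]
  obtain ⟨⟨v, hv, hvd⟩, hd⟩ := hM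
  refine ⟨⟨v, hv, by rw [hS v hv, hvd]⟩, fun u hu => ?_⟩
  rw [hS u hu]
  exact Nat.add_le_add_left (hd u hu) w

theorem HasMinWeight.submatrix {M : Matrix ι κ R} {d : ℕ} (hM : HasMinWeight M d)
    (e : ι' ≃ ι) : HasMinWeight (M.submatrix e id) d := by
  have h (v : κ → R) : hammingNorm (M.submatrix e id *ᵥ v) = hammingNorm (M *ᵥ v) := by
    rw [← hammingNorm_comp_equiv _ e, ← Equiv.coe_refl, submatrix_mulVec_equiv]
    rfl
  simpa only [HasMinWeight, h] using hM

theorem HasMinWeight.map {S : Type*} [CommRing S] [DecidableEq S] {M : Matrix ι κ R} {d : ℕ}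
    (hM : HasMinWeight M d) (e : R ≃+* S) : HasMinWeight (M.map e) d := by
  have h (u : κ → R) : hammingNorm (M.map e *ᵥ (e ∘ u)) = hammingNorm (M *ᵥ u) := by
    have : M.map e *ᵥ (e ∘ u) = fun i => e ((M *ᵥ u) i) :=
      funext fun i => (RingHom.map_mulVec (e : R →+* S) M u i).symm
    rw [this, hammingNorm_comp (fun _ => e) (fun _ => e.injective) (fun _ => map_zero e)]
  have he (u : κ → R) : e ∘ u = 0 ↔ u = 0 := by
    simp only [funext_iff, Function.comp_apply, Pi.zero_apply, map_eq_zero_iff _ e.injective]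
  obtain ⟨⟨v, hv, hvd⟩, hd⟩ := hM
  refine ⟨⟨e ∘ v, (he v).not.2 hv, by rw [h, hvd]⟩, fun u hu => ?_⟩
  obtain ⟨u, rfl⟩ : ∃ u', u = e ∘ u' := ⟨e.symm ∘ u, by ext; simp⟩
  rw [h]
  exact hd u ((he u).not.1 hu)

end MinimumWeight

/- A computable copy of `𝔽₄` (with `A² = B = A + 1`), so that the finitely many facts about the
two small generator matrices below can be checked by `decide`. -/
inductive K4 : Type
  | O | I | A | B
  deriving DecidableEq

namespace K4

instance : Fintype K4 := ⟨⟨[O, I, A, B], by decide⟩, fun x => by cases x <;> decide⟩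

def add : K4 → K4 → K4
  | O, x => x
  | x, O => x
  | I, I => O | I, A => B | I, B => A
  | A, I => B | A, A => O | A, B => I
  | B, I => A | B, A => I | B, B => O

def mul : K4 → K4 → K4
  | O, _ => O
  | _, O => O
  | I, x => x
  | x, I => x
  | A, A => B | A, B => I
  | B, A => I | B, B => A

def inv : K4 → K4
  | O => O | I => I | A => B | B => A

instance : Zero K4 := ⟨O⟩
instance : One K4 := ⟨I⟩
instance : Add K4 := ⟨add⟩
instance : Neg K4 := ⟨id⟩
instance : Mul K4 := ⟨mul⟩
instance : Inv K4 := ⟨inv⟩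

instance : Field K4 where
  nsmul := nsmulRec
  zsmul := zsmulRec
  add_assoc := by decide
  zero_add := by decide
  add_zero := by decide
  add_comm := by decide
  neg_add_cancel := by decide
  mul_assoc := by decide
  one_mul := by decide
  mul_one := by decide
  left_distrib := by decide
  right_distrib := by decide
  mul_comm := by decide
  zero_mul := by decide
  mul_zero := by decide
  exists_pair_ne := ⟨O, I, by decide⟩
  mul_inv_cancel := by decide
  inv_zero := by decide
  nnqsmul := _
  qsmul := _

/-- The rows are the 21 points of the projective plane `PG(2,4)`. -/
def simplexGen : Matrix (Fin 21) (Fin 3) K4 :=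
  !![O, O, I; O, I, O; O, I, I; O, I, A; O, I, B; I, O, O; I, O, I;
    I, O, A; I, O, B; I, I, O; I, I, I; I, I, A; I, I, B; I, A, O;
    I, A, I; I, A, A; I, A, B; I, B, O; I, B, I; I, B, A; I, B, B]

/-- The points of `PG(2,4)` other than `(1, B, A)`, six of them taken twice. -/
def lcdGen : Matrix (Fin 26) (Fin 3) K4 :=
  !![O, O, I; O, O, I; O, I, O; O, I, I; O, I, A; O, I, A; O, I, B;
    I, O, O; I, O, I; I, O, A; I, O, B; I, I, O; I, I, I; I, I, I;
    I, I, A; I, I, B; I, A, O; I, A, O; I, A, I; I, A, A; I, A, B;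
    I, B, O; I, B, I; I, B, I; I, B, B; I, B, B]

theorem hermGram_simplexGen : hermGram simplexGen = 0 := by
  decide

theorem hammingNorm_simplexGen_mulVec :
    ∀ v : Fin 3 → K4, v ≠ 0 → hammingNorm (simplexGen *ᵥ v) = 16 := by
  decide

theorem det_hermGram_lcdGen : (hermGram lcdGen).det ≠ 0 := by
  rw [det_fin_three]
  decide

theorem hasMinWeight_lcdGen : HasMinWeight lcdGen 19 :=
  ⟨⟨![O, I, I], by decide, by decide⟩, by decide⟩

theorem exists_det_hermGram_ne_zero_and_hasMinWeight (t : ℕ) :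
    ∃ M : Matrix (Fin (21 * t + 26)) (Fin 3) K4,
      (hermGram M).det ≠ 0 ∧ HasMinWeight M (16 * t + 19) := by
  induction t with
  | zero => exact ⟨lcdGen, det_hermGram_lcdGen, hasMinWeight_lcdGen⟩
  | succ t ih =>
    obtain ⟨M, hG, hM⟩ := ih
    rw [show 21 * (t + 1) + 26 = 21 + (21 * t + 26) by ring,
      show 16 * (t + 1) + 19 = 16 + (16 * t + 19) by ring]
    refine ⟨(fromRows simplexGen M).submatrix finSumFinEquiv.symm id, ?_,
      (hM.fromRows hammingNorm_simplexGen_mulVec).submatrix _⟩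
    rwa [hermGram_submatrix, hermGram_fromRows, hermGram_simplexGen, zero_add]

end K4

theorem wt_eq_hammingNorm {n : ℕ} (x : Fin n → F4) : wt x = hammingNorm x := by
  unfold wt hammingNorm
  congr

noncomputable instance : Fintype F4 := Fintype.ofFinite F4

theorem card_F4 : Fintype.card F4 = 4 := by
  rw [← Nat.card_eq_fintype_card, GaloisField.card 2 2 two_ne_zero]
  rfl

noncomputable def K4.equivF4 : K4 ≃+* F4 :=
  FiniteField.ringEquivOfCardEq (by rw [card_F4]; rfl)

theorem exists_ne_zero_wt_le {n : ℕ} (C : Submodule F4 (Fin n → F4))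
    (hC : Module.finrank F4 C = 3) : ∃ x ∈ C, x ≠ 0 ∧ 63 * wt x ≤ 48 * n := by
  simpa [card_F4, hC, wt_eq_hammingNorm, mul_comm] using
    exists_ne_zero_mul_hammingNorm_le C (by omega)

theorem hermInner_mulVec_single {n k : ℕ} (M : Matrix (Fin n) (Fin k) F4) (v : Fin k → F4)
    (j : Fin k) : hermInner (M *ᵥ v) (M *ᵥ Pi.single j 1) = (v ᵥ* hermGram M) j := by
  rw [hermGram, ← vecMul_vecMul, vecMul_transpose, mulVec_single_one]
  rfl

theorem isHermLCDCode_range_mulVecLin {n k d : ℕ} (M : Matrix (Fin n) (Fin k) F4)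
    (hG : (hermGram M).det ≠ 0) (hM : HasMinWeight M d) :
    IsHermLCDCode n k d (LinearMap.range M.mulVecLin) := by
  have hinj : Function.Injective M.mulVecLin := by
    rw [← LinearMap.ker_eq_bot, LinearMap.ker_eq_bot']
    intro v hv
    refine eq_zero_of_vecMul_eq_zero hG ?_
    rw [hermGram, ← vecMul_vecMul, vecMul_transpose, ← mulVecLin_apply, hv, zero_vecMul]
  have hne (v : Fin k → F4) : M *ᵥ v ≠ 0 ↔ v ≠ 0 := hinj.ne_iff' (map_zero _)
  refine ⟨?_, ?_, ?_⟩
  · rw [LinearMap.finrank_range_of_inj hinj, Module.finrank_fin_fun]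
  · rintro _ ⟨v, rfl⟩ hdual
    have : v ᵥ* hermGram M = 0 := funext fun j => by
      rw [← hermInner_mulVec_single]
      exact hdual _ ⟨_, rfl⟩
    rw [eq_zero_of_vecMul_eq_zero hG this, map_zero]
  · obtain ⟨⟨v, hv, hvd⟩, hd⟩ := hM
    refine ⟨⟨M *ᵥ v, ⟨v, rfl⟩, (hne v).2 hv, by rw [wt_eq_hammingNorm, hvd]⟩, ?_⟩
    rintro _ ⟨u, rfl⟩ hu
    rw [wt_eq_hammingNorm]
    exact hd u ((hne u).1 hu)

theorem exists_isHermLCDCode (t : ℕ) :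
    ∃ C : Submodule F4 (Fin (21 * t + 26) → F4),
      IsHermLCDCode (21 * t + 26) 3 (16 * t + 19) C := by
  obtain ⟨M, hG, hM⟩ := K4.exists_det_hermGram_ne_zero_and_hasMinWeight t
  refine ⟨_, isHermLCDCode_range_mulVecLin (M.map K4.equivF4) ?_ (hM.map K4.equivF4)⟩
  rw [hermGram_map]
  intro h
  apply hG
  rw [← map_eq_zero_iff _ K4.equivF4.injective, RingEquiv.map_det]
  exact h

/-- `d₄(21s+5, 3) = 16s+3` for every positive integer `s`. -/
theorem stmt15 (s : ℕ) (hs : 1 ≤ s) : d4Is (21 * s + 5) 3 (16 * s + 3) := by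
  obtain ⟨t, rfl⟩ := Nat.exists_eq_add_of_le' hs
  refine ⟨?_, fun C hC _ => ?_⟩
  · rw [show 21 * (t + 1) + 5 = 21 * t + 26 by ring, show 16 * (t + 1) + 3 = 16 * t + 19 by ring]
    exact exists_isHermLCDCode t
  · obtain ⟨x, hxC, hx0, hx⟩ := exists_ne_zero_wt_le C hC
    exact ⟨x, hxC, hx0, by omega⟩
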